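/- Let (X, Σ, λ) be a σ-finite measure space and let f ∈ L¹(X, λ). Then f is a left-symmetric point of L¹(X, λ) if and only if at least one of the following holds: (1) f = 0 λ-almost everywhere; (2) λ(X) > 0, every measurable subset of X is either λ-null or has λ-null complement, and f is not λ-almost everywhere zero; (3) there exist disjoint λ-atoms A and B of finite measure with λ(X \ (A ∪ B)) = 0 and real numbers a, b > 0 such that |f(x)| = a for λ-almost every x ∈ A, |f(y)| = b for λ-almost every y ∈ B, and λ(A)·a = λ(B)·b. -/

import Mathlib

/-!
Everything happens in a two-dimensional weighted `ℓ¹`: suppose `‖u e₁ + v e₂‖ = |u| p + |v| q`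
with `p, q > 0`. Then `e₁` is not left-symmetric (test it against `e₁ + (p/q) e₂`), `e₁ + e₂` is
left-symmetric only if `p = q` (test it against `q e₁ - p e₂`), and conversely, if `p = q` and
`e₁, e₂` span the space, `e₁ + e₂` is left-symmetric.

In `L¹`, the restrictions of `f` to a set `E` and to its complement form such a pair, with weights
`ν E` and `ν Eᶜ`, where `ν = |f| μ`. By the first fact a left-symmetric `f ≠ 0` vanishes only on a
null set, so `ν` has the null sets of `μ`. By the second fact every set that splits `ν` into two
non-null parts splits it into halves, which leaves either a trivial σ-algebra or two atoms of
equal `ν`-mass. Conversely, measurable functions are a.e. constant on atoms, so in these cases `L¹`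
has dimension at most two and the third fact (or a one-dimensional argument) applies.
-/

open MeasureTheory

def IsMeasAtom {X : Type*} [MeasurableSpace X] (μ : Measure X) (A : Set X) : Prop :=
  MeasurableSet A ∧ 0 < μ A ∧
    ∀ B : Set X, B ⊆ A → MeasurableSet B → μ B = 0 ∨ μ (A \ B) = 0

def BirkhoffJamesOrthogonal (𝕜 : Type*) {E : Type*} [Norm E] [Add E] [SMul 𝕜 E] (x y : E) :
    Prop :=
  ∀ c : 𝕜, ‖x‖ ≤ ‖x + c • y‖

def IsLeftSymmetric (𝕜 : Type*) {E : Type*} [Norm E] [Add E] [SMul 𝕜 E] (x : E) : Prop :=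
  ∀ y, BirkhoffJamesOrthogonal 𝕜 x y → BirkhoffJamesOrthogonal 𝕜 y x

section NormedSpace

variable {𝕜 E : Type*} [NormedField 𝕜] [SeminormedAddCommGroup E] [NormedSpace 𝕜 E]

theorem isLeftSymmetric_zero : IsLeftSymmetric 𝕜 (0 : E) :=
  fun _ _ c => by rw [smul_zero, add_zero]

theorem isLeftSymmetric_of_forall_eq_smul {x : E} (hx : ∀ y : E, ∃ k : 𝕜, y = k • x) :
    IsLeftSymmetric 𝕜 x := by
  intro y hxy c
  obtain ⟨k, rfl⟩ := hx y
  suffices ‖k‖ * ‖x‖ = 0 by rw [norm_smul, this]; exact norm_nonneg _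
  rcases eq_or_ne k 0 with hk | hk
  · rw [hk, norm_zero, zero_mul]
  · have : ‖x‖ ≤ 0 := by simpa [smul_smul, inv_mul_cancel₀ hk] using hxy (-k⁻¹)
    rw [le_antisymm this (norm_nonneg x), mul_zero]

end NormedSpace

theorem Complex.norm_one_add_le (z : ℂ) : ‖1 + z‖ ≤ 1 + z.re + ‖z‖ ^ 2 / 2 := by
  have h1 : ‖1 + z‖ ^ 2 = (1 + z.re) ^ 2 + z.im ^ 2 := by
    rw [Complex.sq_norm, Complex.normSq_apply, Complex.add_re, Complex.add_im, Complex.one_re,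
      Complex.one_im, zero_add]
    ring
  have h2 : ‖z‖ ^ 2 = z.re ^ 2 + z.im ^ 2 := by
    rw [Complex.sq_norm, Complex.normSq_apply]; ring
  nlinarith [sq_nonneg (z.re + ‖z‖ ^ 2 / 2), norm_nonneg (1 + z), sq_nonneg (‖z‖ - 1),
    (abs_le.1 (Complex.abs_re_le_norm z)).1]

/-- A second-order expansion of `c ↦ ‖1 + c u‖ + ‖1 + c v‖` at `0` shows that `0` is a minimum
only if the first-order term `Re (c (u + v))` vanishes identically. -/
theorem add_eq_zero_of_forall_two_le {u v : ℂ} (h : ∀ c : ℂ, 2 ≤ ‖1 + c * u‖ + ‖1 + c * v‖) :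
    u + v = 0 := by
  by_contra hs
  set s := u + v
  set K := (‖u‖ ^ 2 + ‖v‖ ^ 2) / 2
  set t := (K + 1)⁻¹
  have ht : 0 < t := by positivity
  have htK : t * K < 1 := by
    rw [inv_mul_lt_one₀ (by positivity)]; linarith
  have hs2 : 0 < ‖s‖ ^ 2 := by positivity
  set c : ℂ := -t * (starRingEnd ℂ) s
  have hre : (c * u).re + (c * v).re = -t * ‖s‖ ^ 2 := by
    rw [← Complex.add_re, ← mul_add, mul_assoc, Complex.conj_mul']
    norm_cast
  have hc : ‖c‖ = t * ‖s‖ := by simp [c, abs_of_pos ht]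
  have hquad : ‖c * u‖ ^ 2 / 2 + ‖c * v‖ ^ 2 / 2 = t ^ 2 * ‖s‖ ^ 2 * K := by
    simp only [norm_mul, hc, K]; ring
  have := h c
  have := Complex.norm_one_add_le (c * u)
  have := Complex.norm_one_add_le (c * v)
  nlinarith [mul_lt_mul_of_pos_left htK (mul_pos ht hs2)]

def IsWeightedL1Pair {E : Type*} [Norm E] [Add E] [SMul ℂ E] (e₁ e₂ : E) (p q : ℝ) : Prop :=
  ∀ u v : ℂ, ‖u • e₁ + v • e₂‖ = ‖u‖ * p + ‖v‖ * q

namespace IsWeightedL1Pair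

variable {E : Type*} [SeminormedAddCommGroup E] [NormedSpace ℂ E] {e₁ e₂ : E} {p q : ℝ}

theorem not_isLeftSymmetric_fst (h : IsWeightedL1Pair e₁ e₂ p q) (hp : 0 < p) (hq : 0 < q) :
    ¬IsLeftSymmetric ℂ e₁ := by
  intro hsymm
  set r : ℂ := ((p / q : ℝ) : ℂ)
  have hr : ‖r‖ * q = p := by
    rw [Complex.norm_real, Real.norm_of_nonneg (by positivity), div_mul_cancel₀ _ hq.ne']
  have he₁ : ‖e₁‖ = p := by simpa using h 1 0
  have horth : BirkhoffJamesOrthogonal ℂ e₁ (e₁ + r • e₂) := by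
    intro c
    rw [show e₁ + c • (e₁ + r • e₂) = (1 + c) • e₁ + (c * r) • e₂ by module, h, norm_mul,
      mul_assoc, hr, he₁]
    have : 1 ≤ ‖1 + c‖ + ‖c‖ := by simpa using norm_sub_le (1 + c) c
    nlinarith
  have := hsymm _ horth (-1)
  rw [show e₁ + r • e₂ + (-1 : ℂ) • e₁ = (0 : ℂ) • e₁ + r • e₂ by module,
    show e₁ + r • e₂ = (1 : ℂ) • e₁ + r • e₂ by module, h, h, hr, norm_one, norm_zero] at this
  linarith

theorem eq_of_isLeftSymmetric_add (h : IsWeightedL1Pair e₁ e₂ p q) (hp : 0 < p) (hq : 0 < q)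
    (hsymm : IsLeftSymmetric ℂ (e₁ + e₂)) : p = q := by
  set g := (q : ℂ) • e₁ + (-p : ℂ) • e₂
  have hg : ‖g‖ = 2 * p * q := by
    rw [h, norm_neg, Complex.norm_real, Complex.norm_real, Real.norm_of_nonneg hp.le,
      Real.norm_of_nonneg hq.le]
    ring
  have horth : BirkhoffJamesOrthogonal ℂ (e₁ + e₂) g := by
    intro c
    rw [show e₁ + e₂ = (1 : ℂ) • e₁ + (1 : ℂ) • e₂ by module,
      show (1 : ℂ) • e₁ + (1 : ℂ) • e₂ + c • g = (1 + c * q) • e₁ + (1 + c * -p) • e₂ by module,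
      h, h, norm_one]
    have h₁ := Complex.re_le_norm (1 + c * q)
    have h₂ := Complex.re_le_norm (1 + c * -p)
    simp only [Complex.add_re, Complex.one_re, Complex.mul_re, Complex.ofReal_re,
      Complex.ofReal_im, Complex.neg_re, Complex.neg_im, mul_zero, sub_zero] at h₁ h₂
    nlinarith
  have h₁ := hsymm g horth p
  have h₂ := hsymm g horth (-q)
  rw [show g + (p : ℂ) • (e₁ + e₂) = ((q + p : ℝ) : ℂ) • e₁ + (0 : ℂ) • e₂ by
      simp only [g]; push_cast; module, hg, h, Complex.norm_real,
    Real.norm_of_nonneg (by positivity)] at h₁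
  rw [show g + (-q : ℂ) • (e₁ + e₂) = (0 : ℂ) • e₁ + (-(p + q : ℝ) : ℂ) • e₂ by
      simp only [g]; push_cast; module, hg, h, norm_neg, Complex.norm_real,
    Real.norm_of_nonneg (by positivity)] at h₂
  simp only [norm_zero, zero_mul, add_zero, zero_add] at h₁ h₂
  nlinarith

theorem isLeftSymmetric_add (h : IsWeightedL1Pair e₁ e₂ p p) (hp : 0 < p)
    (hspan : ∀ g : E, ∃ u v : ℂ, g = u • e₁ + v • e₂) : IsLeftSymmetric ℂ (e₁ + e₂) := by
  intro g horth c
  obtain ⟨u, v, rfl⟩ := hspan g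
  have hsum : u + v = 0 := by
    refine add_eq_zero_of_forall_two_le fun c => le_of_mul_le_mul_right ?_ hp
    have := horth c
    rw [show e₁ + e₂ = (1 : ℂ) • e₁ + (1 : ℂ) • e₂ by module,
      show (1 : ℂ) • e₁ + (1 : ℂ) • e₂ + c • (u • e₁ + v • e₂)
        = (1 + c * u) • e₁ + (1 + c * v) • e₂ by module, h, h, norm_one] at this
    linarith
  obtain rfl : v = -u := eq_neg_of_add_eq_zero_right hsum
  rw [show u • e₁ + -u • e₂ + c • (e₁ + e₂) = (u + c) • e₁ + (-u + c) • e₂ by module, h, h,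
    norm_neg]
  have := norm_sub_le (u + c) (-u + c)
  rw [show u + c - (-u + c) = 2 * u by ring, norm_mul, Complex.norm_two] at this
  nlinarith

end IsWeightedL1Pair

section Atoms

variable {X : Type*} [MeasurableSpace X] {μ ν : Measure X} {A : Set X}

theorem IsMeasAtom.exists_ae_eq_const {β : Type*} [MeasurableSpace β] [Nonempty β]
    [HasCountableSeparatingOn β MeasurableSet Set.univ] (hA : IsMeasAtom μ A) {g : X → β}
    (hg : Measurable g) : ∃ c, g =ᵐ[μ.restrict A] fun _ => c := by
  refine Filter.exists_eventuallyEq_const_of_forall_separating MeasurableSet fun U hU => ?_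
  rcases hA.2.2 (A ∩ g ⁻¹' U) Set.inter_subset_left (hA.1.inter (hg hU)) with h | h
  · right
    rw [ae_iff, Measure.restrict_apply' hA.1]
    refine measure_mono_null (fun x hx => ?_) h
    exact ⟨hx.2, not_not.1 hx.1⟩
  · left
    rw [ae_iff, Measure.restrict_apply' hA.1]
    refine measure_mono_null (fun x hx => ?_) h
    exact ⟨hx.2, fun h' => hx.1 h'.2⟩

theorem IsMeasAtom.of_absolutelyContinuous (hA : IsMeasAtom ν A) (hμν : μ ≪ ν) (hνμ : ν ≪ μ) :
    IsMeasAtom μ A :=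
  ⟨hA.1, pos_iff_ne_zero.2 fun h => hA.2.1.ne' (hνμ h),
    fun B hBA hB => (hA.2.2 B hBA hB).imp (@hμν _) (@hμν _)⟩

theorem isMeasAtom_univ_iff :
    IsMeasAtom μ Set.univ ↔ 0 < μ Set.univ ∧ ∀ E, MeasurableSet E → μ E = 0 ∨ μ Eᶜ = 0 := by
  simp only [IsMeasAtom, MeasurableSet.univ, Set.subset_univ, ← Set.compl_eq_univ_sdiff, true_and,
    forall_const]

/-- A proper split of `E` into `C` and `E \ C` would make `C` split `ν` unequally. -/
theorem isMeasAtom_of_forall_eq_zero_or_eq_compl [IsFiniteMeasure ν]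
    (hν : ∀ E, MeasurableSet E → ν E = 0 ∨ ν Eᶜ = 0 ∨ ν E = ν Eᶜ) {E : Set X}
    (hE : MeasurableSet E) (hE₀ : ν E ≠ 0) (hEc : ν E = ν Eᶜ) : IsMeasAtom ν E := by
  refine ⟨hE, pos_iff_ne_zero.2 hE₀, fun C hCE hC => ?_⟩
  by_contra! ⟨hC₀, hEC₀⟩
  have hsplit : ν C + ν (E \ C) = ν E := by
    rw [measure_add_sdiff hC.nullMeasurableSet, Set.union_eq_right.2 hCE]
  have hCc : ν Cᶜ = ν (E \ C) + ν Eᶜ := by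
    rw [← measure_union (disjoint_compl_right.mono_left Set.sdiff_subset) hE.compl]
    congr 1
    ext x
    have := @hCE x
    simp only [Set.mem_compl_iff, Set.mem_union, Set.mem_sdiff]
    tauto
  rcases hν C hC with h | h | h
  · exact hC₀ h
  · rw [hCc, add_eq_zero] at h
    exact hEC₀ h.1
  · rw [hCc, ← hEc, ← hsplit] at h
    have : ν C + (ν (E \ C) + ν (E \ C)) = ν C + 0 :=
      calc _ = ν (E \ C) + (ν C + ν (E \ C)) := by ring
        _ = ν C + 0 := by rw [← h, add_zero]
    rw [ENNReal.add_right_inj (measure_ne_top ν C), add_eq_zero] at this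
    exact hEC₀ this.1

theorem IsMeasAtom.exists_norm_ae_eq {E : Type*} [NormedAddCommGroup E] [MeasurableSpace E]
    [HasCountableSeparatingOn E MeasurableSet Set.univ] (hA : IsMeasAtom μ A) {f : X → E}
    (hf : Integrable f μ) (hfm : Measurable f) (hf₀ : ∀ᵐ x ∂μ, f x ≠ 0) :
    ∃ a : ℝ, 0 < a ∧ μ A < ⊤ ∧ ∀ᵐ x ∂μ.restrict A, ‖f x‖ = a := by
  obtain ⟨c, hc⟩ := hA.exists_ae_eq_const hfm
  have hc₀ : c ≠ 0 := by
    rintro rfl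
    have : ∀ᵐ x ∂μ.restrict A, False := by
      filter_upwards [hc, ae_restrict_of_ae hf₀] with x h₁ h₂ using h₂ h₁
    exact hA.2.1.ne' (by simpa using ae_iff.1 this)
  refine ⟨‖c‖, norm_pos_iff.2 hc₀, ?_, hc.mono fun x hx => by rw [hx]⟩
  exact ((integrableOn_const_iff (C := c)).1 (hf.integrableOn.congr_fun_ae hc)).resolve_left
    (by simpa)

theorem setLIntegral_enorm_eq_of_ae_norm_eq {E : Type*} [NormedAddCommGroup E] {f : X → E}
    {a : ℝ} (h : ∀ᵐ x ∂μ.restrict A, ‖f x‖ = a) :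
    ∫⁻ x in A, ‖f x‖ₑ ∂μ = ENNReal.ofReal a * μ A := by
  rw [lintegral_congr_ae (h.mono fun x hx => by rw [← ofReal_norm, hx]), setLIntegral_const]

theorem ae_of_ae_restrict_of_ae_restrict_of_compl_union {B : Set X} {P : X → Prop}
    (hA : ∀ᵐ x ∂μ.restrict A, P x) (hB : ∀ᵐ x ∂μ.restrict B, P x) (hAB : μ (A ∪ B)ᶜ = 0) :
    ∀ᵐ x ∂μ, P x :=
  ae_of_ae_restrict_of_ae_restrict_compl (A ∪ B) ((ae_restrict_union_iff _ _ _).2 ⟨hA, hB⟩)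
    (by rw [Measure.restrict_eq_zero.2 hAB]; simp)

end Atoms

section L1

variable {X E : Type*} [MeasurableSpace X] {μ : Measure X} [NormedAddCommGroup E]

noncomputable def indicatorL1 (f : Lp E 1 μ) {s : Set X} (hs : MeasurableSet s) : Lp E 1 μ :=
  ((L1.integrable_coeFn f).indicator hs).toL1 _

variable {s : Set X}

theorem coeFn_indicatorL1 (f : Lp E 1 μ) (hs : MeasurableSet s) :
    indicatorL1 f hs =ᵐ[μ] s.indicator f :=
  Integrable.coeFn_toL1 _

theorem norm_indicatorL1 (f : Lp E 1 μ) (hs : MeasurableSet s) :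
    ‖indicatorL1 f hs‖ = (∫⁻ x in s, ‖f x‖ₑ ∂μ).toReal := by
  rw [indicatorL1, Integrable.norm_toL1_eq_lintegral_enorm, ← lintegral_indicator hs]
  simp_rw [enorm_indicator_eq_indicator_enorm]

theorem indicatorL1_add_indicatorL1 (f : Lp E 1 μ) {t : Set X} (hs : MeasurableSet s)
    (ht : MeasurableSet t) (hst : Disjoint s t) (hcover : μ (s ∪ t)ᶜ = 0) :
    indicatorL1 f hs + indicatorL1 f ht = f := by
  refine Lp.ext ?_
  filter_upwards [Lp.coeFn_add (indicatorL1 f hs) (indicatorL1 f ht), coeFn_indicatorL1 f hs,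
    coeFn_indicatorL1 f ht, measure_eq_zero_iff_ae_notMem.1 hcover] with x h h₁ h₂ hx
  rw [h, Pi.add_apply, h₁, h₂]
  rcases not_not.1 hx with hxs | hxt
  · rw [Set.indicator_of_mem hxs, Set.indicator_of_notMem (hst.notMem_of_mem_left hxs), add_zero]
  · rw [Set.indicator_of_notMem (hst.notMem_of_mem_right hxt), Set.indicator_of_mem hxt, zero_add]

theorem L1.norm_add_of_ae_eq_zero_or {f g : Lp E 1 μ} (h : ∀ᵐ x ∂μ, f x = 0 ∨ g x = 0) :
    ‖f + g‖ = ‖f‖ + ‖g‖ := by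
  simp only [L1.norm_eq_integral_norm]
  rw [← integral_add (L1.integrable_coeFn f).norm (L1.integrable_coeFn g).norm]
  refine integral_congr_ae ?_
  filter_upwards [Lp.coeFn_add f g, h] with x hx h₀
  rw [hx, Pi.add_apply]
  rcases h₀ with h₀ | h₀ <;> simp [h₀]

theorem isWeightedL1Pair_of_ae_eq_zero_or [NormedSpace ℂ E] {e₁ e₂ : Lp E 1 μ}
    (h : ∀ᵐ x ∂μ, e₁ x = 0 ∨ e₂ x = 0) : IsWeightedL1Pair e₁ e₂ ‖e₁‖ ‖e₂‖ := by
  intro u v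
  rw [L1.norm_add_of_ae_eq_zero_or, norm_smul, norm_smul]
  filter_upwards [h, Lp.coeFn_smul u e₁, Lp.coeFn_smul v e₂] with x h₀ h₁ h₂
  rw [h₁, h₂]
  rcases h₀ with h₀ | h₀ <;> simp [h₀]

theorem isWeightedL1Pair_indicatorL1 [NormedSpace ℂ E] (f : Lp E 1 μ) {t : Set X}
    (hs : MeasurableSet s) (ht : MeasurableSet t) (hst : Disjoint s t) :
    IsWeightedL1Pair (indicatorL1 f hs) (indicatorL1 f ht) ‖indicatorL1 f hs‖
      ‖indicatorL1 f ht‖ := by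
  refine isWeightedL1Pair_of_ae_eq_zero_or ?_
  filter_upwards [coeFn_indicatorL1 f hs, coeFn_indicatorL1 f ht] with x h₁ h₂
  by_cases hx : x ∈ s
  · exact Or.inr (by rw [h₂, Set.indicator_of_notMem (hst.notMem_of_mem_left hx)])
  · exact Or.inl (by rw [h₁, Set.indicator_of_notMem hx])

theorem smul_indicatorL1_add_smul_ae_eq [NormedSpace ℂ E] (f : Lp E 1 μ) {t : Set X}
    (hs : MeasurableSet s) (ht : MeasurableSet t) (hst : Disjoint s t) (u v : ℂ) :
    ⇑(u • indicatorL1 f hs + v • indicatorL1 f ht) =ᵐ[μ.restrict s] fun x => u • f x := by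
  filter_upwards [ae_restrict_of_ae (Lp.coeFn_add (u • indicatorL1 f hs) (v • indicatorL1 f ht)),
    ae_restrict_of_ae (Lp.coeFn_smul u (indicatorL1 f hs)),
    ae_restrict_of_ae (Lp.coeFn_smul v (indicatorL1 f ht)),
    ae_restrict_of_ae (coeFn_indicatorL1 f hs), ae_restrict_of_ae (coeFn_indicatorL1 f ht),
    ae_restrict_mem hs] with x h h₁ h₂ h₃ h₄ hx
  rw [h, Pi.add_apply, h₁, h₂, Pi.smul_apply, Pi.smul_apply, h₃, h₄, Set.indicator_of_mem hx,
    Set.indicator_of_notMem (hst.notMem_of_mem_left hx), smul_zero, add_zero]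

end L1

section LeftSymmetric

variable {X : Type*} [MeasurableSpace X] {μ : Measure X} {f : Lp ℂ 1 μ}

theorem ae_ne_zero_of_isLeftSymmetric [SigmaFinite μ] (hf : IsLeftSymmetric ℂ f) (hf₀ : f ≠ 0) :
    ∀ᵐ x ∂μ, f x ≠ 0 := by
  by_contra h
  simp only [ae_iff, not_not] at h
  have hZ : MeasurableSet {x | f x = 0} :=
    (Lp.stronglyMeasurable f).measurable (measurableSet_singleton 0)
  obtain ⟨W, hW, hWZ, hW₀, hWfin⟩ := Measure.exists_subset_measure_lt_top hZ (pos_iff_ne_zero.2 h)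
  set χ := indicatorConstLp 1 hW hWfin.ne (1 : ℂ)
  have hdisj : ∀ᵐ x ∂μ, f x = 0 ∨ χ x = 0 := by
    filter_upwards [indicatorConstLp_coeFn (p := 1) (hs := hW) (hμs := hWfin.ne) (c := (1 : ℂ))]
      with x hx
    by_cases hxW : x ∈ W
    · exact Or.inl (hWZ hxW)
    · exact Or.inr (by rw [hx, Set.indicator_of_notMem hxW])
  refine (isWeightedL1Pair_of_ae_eq_zero_or hdisj).not_isLeftSymmetric_fst (norm_pos_iff.2 hf₀)
    ?_ hf
  rw [norm_indicatorConstLp one_ne_zero ENNReal.one_ne_top]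
  simpa [measureReal_def] using ENNReal.toReal_pos hW₀.ne' hWfin.ne

theorem withDensity_enorm_eq_zero_or_eq_compl (hf : IsLeftSymmetric ℂ f) {E : Set X}
    (hE : MeasurableSet E) :
    μ.withDensity (‖f ·‖ₑ) E = 0 ∨ μ.withDensity (‖f ·‖ₑ) Eᶜ = 0 ∨
      μ.withDensity (‖f ·‖ₑ) E = μ.withDensity (‖f ·‖ₑ) Eᶜ := by
  have hfin (s : Set X) : ∫⁻ x in s, ‖f x‖ₑ ∂μ ≠ ⊤ :=
    (setLIntegral_le_lintegral s _).trans_lt (L1.integrable_coeFn f).2 |>.ne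
  rw [withDensity_apply _ hE, withDensity_apply _ hE.compl]
  by_contra! h
  have := (isWeightedL1Pair_indicatorL1 f hE hE.compl
    disjoint_compl_right).eq_of_isLeftSymmetric_add
    (by rw [norm_indicatorL1]; exact ENNReal.toReal_pos h.1 (hfin _))
    (by rw [norm_indicatorL1]; exact ENNReal.toReal_pos h.2.1 (hfin _))
    (by rwa [indicatorL1_add_indicatorL1 f hE hE.compl disjoint_compl_right (by simp)])
  rw [norm_indicatorL1, norm_indicatorL1, ENNReal.toReal_eq_toReal_iff' (hfin _) (hfin _)] at this
  exact h.2.2 this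

theorem isLeftSymmetric_of_isMeasAtom_univ (hX : IsMeasAtom μ Set.univ) (hf₀ : f ≠ 0) :
    IsLeftSymmetric ℂ f := by
  refine isLeftSymmetric_of_forall_eq_smul fun g => ?_
  obtain ⟨c, hc⟩ := hX.exists_ae_eq_const (Lp.stronglyMeasurable f).measurable
  obtain ⟨d, hd⟩ := hX.exists_ae_eq_const (Lp.stronglyMeasurable g).measurable
  rw [Measure.restrict_univ] at hc hd
  have hc₀ : c ≠ 0 := by
    rintro rfl
    exact hf₀ (Lp.eq_zero_iff_ae_eq_zero.2 hc)
  refine ⟨d / c, Lp.ext ?_⟩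
  filter_upwards [hc, hd, Lp.coeFn_smul (d / c) f] with x hcx hdx hx
  rw [hx, Pi.smul_apply, hcx, hdx, smul_eq_mul, div_mul_cancel₀ d hc₀]

theorem exists_eq_smul_indicatorL1_add_smul {A B : Set X} (hA : IsMeasAtom μ A)
    (hB : IsMeasAtom μ B) (hAB : Disjoint A B) (hcover : μ (A ∪ B)ᶜ = 0)
    (hfA : ∀ᵐ x ∂μ.restrict A, f x ≠ 0) (hfB : ∀ᵐ x ∂μ.restrict B, f x ≠ 0) (g : Lp ℂ 1 μ) :
    ∃ u v : ℂ, g = u • indicatorL1 f hA.1 + v • indicatorL1 f hB.1 := by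
  have hfm := (Lp.stronglyMeasurable f).measurable
  have hgm := (Lp.stronglyMeasurable g).measurable
  obtain ⟨f₁, hf₁⟩ := hA.exists_ae_eq_const hfm
  obtain ⟨f₂, hf₂⟩ := hB.exists_ae_eq_const hfm
  obtain ⟨g₁, hg₁⟩ := hA.exists_ae_eq_const hgm
  obtain ⟨g₂, hg₂⟩ := hB.exists_ae_eq_const hgm
  refine ⟨g₁ / f₁, g₂ / f₂, Lp.ext (ae_of_ae_restrict_of_ae_restrict_of_compl_union ?_ ?_ hcover)⟩
  · filter_upwards [smul_indicatorL1_add_smul_ae_eq f hA.1 hB.1 hAB (g₁ / f₁) (g₂ / f₂), hf₁, hg₁,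
      hfA] with x hx hfx hgx hfx₀
    rw [hx, hgx, hfx, smul_eq_mul, div_mul_cancel₀ _ (hfx ▸ hfx₀)]
  · rw [add_comm]
    filter_upwards [smul_indicatorL1_add_smul_ae_eq f hB.1 hA.1 hAB.symm (g₂ / f₂) (g₁ / f₁), hf₂,
      hg₂, hfB] with x hx hfx hgx hfx₀
    rw [hx, hgx, hfx, smul_eq_mul, div_mul_cancel₀ _ (hfx ▸ hfx₀)]

theorem isLeftSymmetric_of_isMeasAtom_of_isMeasAtom {A B : Set X} (hA : IsMeasAtom μ A)
    (hB : IsMeasAtom μ B) (hAB : Disjoint A B) (hAfin : μ A < ⊤) (hcover : μ (A ∪ B)ᶜ = 0)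
    {a b : ℝ} (ha : 0 < a) (hb : 0 < b) (hfA : ∀ᵐ x ∂μ.restrict A, ‖f x‖ = a)
    (hfB : ∀ᵐ x ∂μ.restrict B, ‖f x‖ = b) (hbal : (μ A).toReal * a = (μ B).toReal * b) :
    IsLeftSymmetric ℂ f := by
  set e₁ := indicatorL1 f hA.1
  set e₂ := indicatorL1 f hB.1
  have he₁ : ‖e₁‖ = (μ A).toReal * a := by
    rw [norm_indicatorL1, setLIntegral_enorm_eq_of_ae_norm_eq hfA, ENNReal.toReal_mul,
      ENNReal.toReal_ofReal ha.le, mul_comm]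
  have he₂ : ‖e₂‖ = (μ B).toReal * b := by
    rw [norm_indicatorL1, setLIntegral_enorm_eq_of_ae_norm_eq hfB, ENNReal.toReal_mul,
      ENNReal.toReal_ofReal hb.le, mul_comm]
  have hpair := isWeightedL1Pair_indicatorL1 f hA.1 hB.1 hAB
  rw [he₂, ← hbal, ← he₁] at hpair
  rw [← indicatorL1_add_indicatorL1 f hA.1 hB.1 hAB hcover]
  refine hpair.isLeftSymmetric_add ?_ (exists_eq_smul_indicatorL1_add_smul hA hB hAB hcover
    (hfA.mono fun x hx => norm_pos_iff.1 (by rwa [hx]))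
    (hfB.mono fun x hx => norm_pos_iff.1 (by rwa [hx])))
  rw [he₁]
  exact mul_pos (ENNReal.toReal_pos hA.2.1.ne' hAfin.ne) ha

theorem isMeasAtom_univ_or_exists_isMeasAtom_of_isLeftSymmetric [SigmaFinite μ]
    (hf : IsLeftSymmetric ℂ f) (hf₀ : f ≠ 0) :
    IsMeasAtom μ Set.univ ∨
      ∃ A B : Set X, IsMeasAtom μ A ∧ IsMeasAtom μ B ∧ Disjoint A B ∧
        μ A < ⊤ ∧ μ B < ⊤ ∧ μ (A ∪ B)ᶜ = 0 ∧
        ∃ a b : ℝ, 0 < a ∧ 0 < b ∧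
          (∀ᵐ x ∂μ.restrict A, ‖f x‖ = a) ∧
          (∀ᵐ y ∂μ.restrict B, ‖f y‖ = b) ∧
          (μ A).toReal * a = (μ B).toReal * b := by
  have hf₀' := ae_ne_zero_of_isLeftSymmetric hf hf₀
  set ν := μ.withDensity (‖f ·‖ₑ)
  have : IsFiniteMeasure ν := isFiniteMeasure_withDensity (L1.integrable_coeFn f).2.ne
  have hνμ : ν ≪ μ := withDensity_absolutelyContinuous μ _
  have hμν : μ ≪ ν := withDensity_absolutelyContinuous' (Lp.aestronglyMeasurable f).enorm
    (hf₀'.mono fun x hx => enorm_ne_zero.2 hx)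
  have hhalf (E : Set X) (hE : MeasurableSet E) := withDensity_enorm_eq_zero_or_eq_compl hf hE
  by_cases htriv : ∀ E, MeasurableSet E → ν E = 0 ∨ ν Eᶜ = 0
  · refine Or.inl ((isMeasAtom_univ_iff.2 ⟨?_, htriv⟩).of_absolutelyContinuous hμν hνμ)
    refine pos_iff_ne_zero.2 fun h => hf₀ (Lp.eq_zero_iff_ae_eq_zero.2 ?_)
    exact ae_iff.2 (measure_mono_null (Set.subset_univ _) (hμν h))
  push Not at htriv
  obtain ⟨E, hE, hE₀, hEc₀⟩ := htriv
  have hEq : ν E = ν Eᶜ := ((hhalf E hE).resolve_left hE₀).resolve_left hEc₀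
  have hA := (isMeasAtom_of_forall_eq_zero_or_eq_compl hhalf hE hE₀ hEq).of_absolutelyContinuous
    hμν hνμ
  have hB := (isMeasAtom_of_forall_eq_zero_or_eq_compl hhalf hE.compl hEc₀
    (by rw [compl_compl, hEq])).of_absolutelyContinuous hμν hνμ
  have hfm := (Lp.stronglyMeasurable f).measurable
  obtain ⟨a, ha, hAfin, hfA⟩ := hA.exists_norm_ae_eq (L1.integrable_coeFn f) hfm hf₀'
  obtain ⟨b, hb, hBfin, hfB⟩ := hB.exists_norm_ae_eq (L1.integrable_coeFn f) hfm hf₀'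
  refine Or.inr ⟨E, Eᶜ, hA, hB, disjoint_compl_right, hAfin, hBfin, by simp, a, b, ha, hb, hfA,
    hfB, ?_⟩
  rw [withDensity_apply _ hE, withDensity_apply _ hE.compl, setLIntegral_enorm_eq_of_ae_norm_eq hfA,
    setLIntegral_enorm_eq_of_ae_norm_eq hfB] at hEq
  simpa [ENNReal.toReal_mul, ha.le, hb.le, mul_comm] using congrArg ENNReal.toReal hEq

end LeftSymmetric

/-- **Left-symmetric points of `L¹`.** For a σ-finite measure space, `f ∈ L¹(X, μ)` is a
left-symmetric point for Birkhoff-James orthogonality iff `f = 0`, or the σ-algebra is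
μ-trivial (and `μ X > 0`, `f ≠ 0`), or `X` is (up to a null set) the union of two disjoint
finite-measure `μ`-atoms `A, B` with `|f| = a` a.e. on `A`, `|f| = b` a.e. on `B` and
`μ(A)·a = μ(B)·b`. -/
theorem left_symmetric_points_L1 (X : Type*) [MeasurableSpace X] (μ : Measure X)
    [SigmaFinite μ] (f : Lp ℂ 1 μ) :
    (∀ g : Lp ℂ 1 μ, (∀ c : ℂ, ‖f‖ ≤ ‖f + c • g‖) → (∀ c : ℂ, ‖g‖ ≤ ‖g + c • f‖)) ↔
      (f = 0 ∨
        (0 < μ Set.univ ∧ (∀ A : Set X, MeasurableSet A → μ A = 0 ∨ μ Aᶜ = 0) ∧ f ≠ 0) ∨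
        (∃ A B : Set X, IsMeasAtom μ A ∧ IsMeasAtom μ B ∧ Disjoint A B ∧
          μ A < ⊤ ∧ μ B < ⊤ ∧ μ (A ∪ B)ᶜ = 0 ∧
          ∃ a b : ℝ, 0 < a ∧ 0 < b ∧
            (∀ᵐ x ∂μ.restrict A, ‖f x‖ = a) ∧
            (∀ᵐ y ∂μ.restrict B, ‖f y‖ = b) ∧
            (μ A).toReal * a = (μ B).toReal * b)) := by
  change IsLeftSymmetric ℂ f ↔ _
  constructor
  · intro hf
    by_cases hf₀ : f = 0
    · exact Or.inl hf₀
    rcases isMeasAtom_univ_or_exists_isMeasAtom_of_isLeftSymmetric hf hf₀ with hX | hAB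
    · exact Or.inr (Or.inl ⟨(isMeasAtom_univ_iff.1 hX).1, (isMeasAtom_univ_iff.1 hX).2, hf₀⟩)
    · exact Or.inr (Or.inr hAB)
  · rintro (rfl | ⟨hX, htriv, hf₀⟩ |
      ⟨A, B, hA, hB, hAB, hAfin, -, hcover, a, b, ha, hb, hfA, hfB, hbal⟩)
    · exact isLeftSymmetric_zero
    · exact isLeftSymmetric_of_isMeasAtom_univ (isMeasAtom_univ_iff.2 ⟨hX, htriv⟩) hf₀
    · exact isLeftSymmetric_of_isMeasAtom_of_isMeasAtom hA hB hAB hAfin hcover ha hb hfA hfB hbal
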